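/- Let A, B, C : ℝ⁴ → ℝ be smooth with A + C > 0. If A, B, C satisfy both the W₁ conditions ((A+C)(B_4 - B_2) = B(A_4 - C_2 + C_4 - A_2), (A+C)(B_3 - B_1) = B(A_3 - C_1 + C_3 - A_1)) and the W₂ conditions ((A+C)(C_3 - A_1) = 2B(B_3 - B_1), C_3 - A_1 = A_3 - C_1, (A+C)(C_4 - A_2) = 2B(B_4 - B_2), C_4 - A_2 = A_4 - C_2) and additionally (A+C)² ≠ 4B², then the W₀ conditions hold: A_3 = C_1, A_1 = C_3, B_3 = B_1, B_4 = B_2, A_2 = C_4, A_4 = C_2. -/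
import Mathlib


/-- Partial derivative in direction `i` of a real-valued function on ℝ⁴. -/
noncomputable def pd (i : Fin 4) (f : (Fin 4 → ℝ) → ℝ) (x : Fin 4 → ℝ) : ℝ :=
  fderiv ℝ f x (Pi.single i 1)

theorem stmt16 (A B C : (Fin 4 → ℝ) → ℝ)
    (hpos : ∀ x, A x + C x > 0)
    (hne : ∀ x, (A x + C x)^2 ≠ 4 * (B x)^2)
    (hw1a : ∀ x, (A x + C x) * (pd 3 B x - pd 1 B x)
      = B x * (pd 3 A x - pd 1 C x + pd 3 C x - pd 1 A x))
    (hw1b : ∀ x, (A x + C x) * (pd 2 B x - pd 0 B x)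
      = B x * (pd 2 A x - pd 0 C x + pd 2 C x - pd 0 A x))
    (hw2a : ∀ x, (A x + C x) * (pd 2 C x - pd 0 A x) = 2 * B x * (pd 2 B x - pd 0 B x))
    (hw2b : ∀ x, pd 2 C x - pd 0 A x = pd 2 A x - pd 0 C x)
    (hw2c : ∀ x, (A x + C x) * (pd 3 C x - pd 1 A x) = 2 * B x * (pd 3 B x - pd 1 B x))
    (hw2d : ∀ x, pd 3 C x - pd 1 A x = pd 3 A x - pd 1 C x) :
    ∀ x, pd 2 A x = pd 0 C x ∧ pd 0 A x = pd 2 C x ∧ pd 2 B x = pd 0 B x ∧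
      pd 3 B x = pd 1 B x ∧ pd 1 A x = pd 3 C x ∧ pd 3 A x = pd 1 C x := by
  intro x
  have h1 := hw1a x; have h2 := hw1b x
  have h3 := hw2a x; have h4 := hw2b x
  have h5 := hw2c x; have h6 := hw2d x
  have hne' := hne x
  have hacne : A x + C x ≠ 0 := ne_of_gt (hpos x)
  have hu : pd 2 C x - pd 0 A x = 0 := by
    have key : ((A x + C x)^2 - 4 * (B x)^2) * (pd 2 C x - pd 0 A x) = 0 := by
      linear_combination (A x + C x) * h3 + 2 * B x * h2 - 2 * (B x)^2 * h4
    rcases mul_eq_zero.mp key with h | h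
    · exact absurd (by linarith) hne'
    · exact h
  have hv : pd 2 B x - pd 0 B x = 0 := by
    have key : (A x + C x) * (pd 2 B x - pd 0 B x) = 0 := by
      linear_combination h2 - B x * h4 + 2 * B x * hu
    exact (mul_eq_zero.mp key).resolve_left hacne
  have hu' : pd 3 C x - pd 1 A x = 0 := by
    have key : ((A x + C x)^2 - 4 * (B x)^2) * (pd 3 C x - pd 1 A x) = 0 := by
      linear_combination (A x + C x) * h5 + 2 * B x * h1 - 2 * (B x)^2 * h6
    rcases mul_eq_zero.mp key with h | h
    · exact absurd (by linarith) hne'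
    · exact h
  have hv' : pd 3 B x - pd 1 B x = 0 := by
    have key : (A x + C x) * (pd 3 B x - pd 1 B x) = 0 := by
      linear_combination h1 - B x * h6 + 2 * B x * hu'
    exact (mul_eq_zero.mp key).resolve_left hacne
  refine ⟨by linarith, by linarith, by linarith, by linarith, by linarith, by linarith⟩
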